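/- Let A be a data matrix and let p* be the algorithm's distribution. Then for every sampling distribution q on the entries of A, ε₁(p*) ≤ 3·ε₁(q); in particular ε₁(p*) is within a factor 3 of the infimum of ε₁ over all sampling distributions. -/

import Mathlib

open Matrix

/-- The spectral norm (ℓ2→ℓ2 operator norm) of a rectangular real matrix. -/
noncomputable def specNorm {m n : ℕ} (A : Matrix (Fin m) (Fin n) ℝ) : ℝ :=
  ‖(Matrix.toEuclideanLin A).toContinuousLinearMap‖

/-- `σ(p)² = max{ ‖D_r(p) − A Aᵀ‖₂, ‖D_c(p) − Aᵀ A‖₂ }`. -/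
noncomputable def sigmaSq {m n : ℕ} (A : Matrix (Fin m) (Fin n) ℝ)
    (p : Fin m → Fin n → ℝ) : ℝ :=
  max (specNorm (Matrix.diagonal (fun i => ∑ j, A i j ^ 2 / p i j) - A * Aᵀ))
      (specNorm (Matrix.diagonal (fun j => ∑ i, A i j ^ 2 / p i j) - Aᵀ * A))

/-- `R(p)`: the maximum over pairs `(i,j)` with `p i j > 0` of `‖A − B^(i,j)‖₂`. -/
noncomputable def Rp {m n : ℕ} (A : Matrix (Fin m) (Fin n) ℝ)
    (p : Fin m → Fin n → ℝ) : ℝ :=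
  sSup {x : ℝ | ∃ i j, 0 < p i j ∧
    x = specNorm (A - Matrix.single i j (A i j / p i j))}

/-- `ε₁(p) = inf{ ε > 0 : (m+n)·exp(−sε²/(σ(p)² + R(p)·ε/3)) ≤ δ }`. -/
noncomputable def eps1 {m n : ℕ} (s : ℕ) (δ : ℝ) (A : Matrix (Fin m) (Fin n) ℝ)
    (p : Fin m → Fin n → ℝ) : ℝ :=
  sInf {ε : ℝ | 0 < ε ∧
    (m + n : ℝ) * Real.exp (-(s * ε ^ 2) / (sigmaSq A p + Rp A p * ε / 3)) ≤ δ}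

/-- `α = √(log((m+n)/δ)/s)`. -/
noncomputable def alphaC (m n s : ℕ) (δ : ℝ) : ℝ :=
  Real.sqrt (Real.log ((m + n : ℝ) / δ) / s)

/-- `β = log((m+n)/δ)/(3s)`. -/
noncomputable def betaC (m n s : ℕ) (δ : ℝ) : ℝ :=
  Real.log ((m + n : ℝ) / δ) / (3 * s)

/-- `ρ_i(ζ) = ( α z_i/(2ζ) + √( (α z_i/(2ζ))² + β z_i/ζ ) )²`. -/
noncomputable def rhoFun (α β z ζ : ℝ) : ℝ :=
  (α * z / (2 * ζ) + Real.sqrt ((α * z / (2 * ζ)) ^ 2 + β * z / ζ)) ^ 2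

/-- The algorithm's distribution: `p* i j = ρ_i(ζ₁) · |A i j| / ‖A_(i)‖₁`
with `z_i = ‖A_(i)‖₁`. -/
noncomputable def pstar {m n : ℕ} (α β : ℝ) (A : Matrix (Fin m) (Fin n) ℝ)
    (ζ₁ : ℝ) : Fin m → Fin n → ℝ :=
  fun i j => rhoFun α β (∑ j', |A i j'|) ζ₁ * |A i j| / ∑ j', |A i j'|

/-!
Taking logarithms, `ε > 0` lies in the set whose infimum is `ε₁(p)` (call it admissible for `p`)
iff `α² σ(p)² + β R(p) ε ≤ ε²`.
Since `√ρᵢ` is the positive root of `ζ₁ x² = α zᵢ x + β zᵢ`, the distribution `p*` has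
`zᵢ² / ρᵢ ≤ (ζ₁ / α)²` and `zᵢ / ρᵢ ≤ ζ₁ / β`; as columns are lighter than rows, this gives
`σ(p*)² ≤ (ζ₁ / α)² + ‖A‖²` and `R(p*) ≤ ‖A‖ + ζ₁ / β`. For any other `q`, some row `i` has mass
`rᵢ ≤ ρᵢ`. Cauchy–Schwarz and a mediant argument on that row give `zᵢ / √rᵢ ≤ σ(q) + ‖A‖` and
`zᵢ / rᵢ ≤ R(q) + ‖A‖`, and as `ζ` decreases in `ρ`, `ζ₁ ≤ α (σ(q) + ‖A‖) + β (R(q) + ‖A‖)`.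
The data-matrix assumptions make `α ‖A‖` and `β ‖A‖` small multiples of `ζ₁`, so every `ε`
admissible for `q` has `ζ₁ ≤ (125/83) ε`, and then `3ε` is admissible for `p*`.
-/

open scoped Matrix.Norms.L2Operator

namespace Matrix

variable {m n : Type*} [Fintype m] [Fintype n] [DecidableEq n]

lemma l2_opNorm_diagonal_le {d : n → ℝ} {c : ℝ} (hc : 0 ≤ c) (hd : ∀ i, |d i| ≤ c) :
    ‖(diagonal d : Matrix n n ℝ)‖ ≤ c := by
  rw [l2_opNorm_diagonal]
  exact (pi_norm_le_iff_of_nonneg hc).2 hd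

lemma l2_opNorm_transpose_mul_self (A : Matrix m n ℝ) : ‖Aᵀ * A‖ = ‖A‖ ^ 2 := by
  rw [← conjTranspose_eq_transpose_of_trivial, sq, l2_opNorm_conjTranspose_mul_self]

variable [DecidableEq m]

lemma l2_opNorm_mul_transpose_self (A : Matrix m n ℝ) : ‖A * Aᵀ‖ = ‖A‖ ^ 2 := by
  rw [← conjTranspose_eq_transpose_of_trivial, ← l2_opNorm_conjTranspose A, sq,
    ← l2_opNorm_conjTranspose_mul_self, conjTranspose_conjTranspose]

lemma l2_opNorm_single (i : m) (j : n) (c : ℝ) : ‖(single i j c : Matrix m n ℝ)‖ = |c| := by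
  have h : ‖(single i j c : Matrix m n ℝ)‖ * ‖(single i j c : Matrix m n ℝ)‖ = |c| * |c| := by
    rw [← l2_opNorm_conjTranspose_mul_self, conjTranspose_eq_transpose_of_trivial, transpose_single,
      single_mul_single_same, ← diagonal_single, l2_opNorm_diagonal, Pi.norm_single,
      Real.norm_eq_abs, abs_mul]
  exact (mul_self_inj (norm_nonneg _) (abs_nonneg c)).1 h

lemma abs_apply_le_l2_opNorm (A : Matrix m n ℝ) (i : m) (j : n) : |A i j| ≤ ‖A‖ :=
  calc |A i j| = ‖single i i (1 : ℝ) * A * single j j 1‖ := by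
        rw [single_mul_mul_single, l2_opNorm_single, one_mul, mul_one]
    _ ≤ ‖single i i (1 : ℝ)‖ * ‖A‖ * ‖(single j j 1 : Matrix n n ℝ)‖ :=
        (l2_opNorm_mul _ _).trans (mul_le_mul_of_nonneg_right (l2_opNorm_mul _ _) (norm_nonneg _))
    _ = ‖A‖ := by simp only [l2_opNorm_single, abs_one, one_mul, mul_one]

end Matrix

section SamplingStatistics

variable {m n : ℕ} (A : Matrix (Fin m) (Fin n) ℝ) (p : Fin m → Fin n → ℝ)

lemma sigmaSq_nonneg : 0 ≤ sigmaSq A p :=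
  (norm_nonneg _).trans (le_max_left _ _)

lemma sum_sq_div_le_sigmaSq_add (i : Fin m) :
    ∑ j, A i j ^ 2 / p i j ≤ sigmaSq A p + ‖A‖ ^ 2 := by
  set D := Matrix.diagonal fun i => ∑ j, A i j ^ 2 / p i j
  calc ∑ j, A i j ^ 2 / p i j ≤ ‖D‖ := by
        simpa [D] using (le_abs_self _).trans (Matrix.abs_apply_le_l2_opNorm D i i)
    _ ≤ ‖D - A * Aᵀ‖ + ‖A * Aᵀ‖ := norm_le_norm_sub_add _ _
    _ ≤ sigmaSq A p + ‖A‖ ^ 2 := by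
        rw [Matrix.l2_opNorm_mul_transpose_self]
        exact add_le_add_left (le_max_left _ _) _

lemma sigmaSq_le_of_forall (hp : ∀ i j, 0 ≤ p i j) {c : ℝ} (hc : 0 ≤ c)
    (hrow : ∀ i, ∑ j, A i j ^ 2 / p i j ≤ c) (hcol : ∀ j, ∑ i, A i j ^ 2 / p i j ≤ c) :
    sigmaSq A p ≤ c + ‖A‖ ^ 2 := by
  have hnonneg : ∀ i j, 0 ≤ A i j ^ 2 / p i j := fun i j => div_nonneg (sq_nonneg _) (hp i j)
  apply max_le
  · refine (norm_sub_le _ _).trans (add_le_add ?_ (Matrix.l2_opNorm_mul_transpose_self A).le)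
    refine Matrix.l2_opNorm_diagonal_le hc fun i => ?_
    rw [abs_of_nonneg (Finset.sum_nonneg fun j _ => hnonneg i j)]
    exact hrow i
  · refine (norm_sub_le _ _).trans (add_le_add ?_ (Matrix.l2_opNorm_transpose_mul_self A).le)
    refine Matrix.l2_opNorm_diagonal_le hc fun j => ?_
    rw [abs_of_nonneg (Finset.sum_nonneg fun i _ => hnonneg i j)]
    exact hcol j

variable {A p}

lemma le_Rp {i : Fin m} {j : Fin n} (h : 0 < p i j) :
    ‖A - Matrix.single i j (A i j / p i j)‖ ≤ Rp A p := by
  refine le_csSup ((Set.finite_range fun x : Fin m × Fin n =>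
      specNorm (A - Matrix.single x.1 x.2 (A x.1 x.2 / p x.1 x.2))).subset ?_).bddAbove
    ⟨i, j, h, rfl⟩
  rintro _ ⟨i', j', -, rfl⟩
  exact ⟨(i', j'), rfl⟩

lemma Rp_le_of_forall {c : ℝ} (hc : 0 ≤ c) (h : ∀ i j, 0 < p i j → |A i j / p i j| ≤ c) :
    Rp A p ≤ ‖A‖ + c := by
  refine Real.sSup_le ?_ (by positivity)
  rintro _ ⟨i, j, hij, rfl⟩
  calc ‖A - Matrix.single i j (A i j / p i j)‖ ≤ ‖A‖ + ‖Matrix.single i j (A i j / p i j)‖ :=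
        norm_sub_le _ _
    _ ≤ ‖A‖ + c := by rw [Matrix.l2_opNorm_single]; gcongr; exact h i j hij

lemma abs_div_le_Rp_add {i : Fin m} {j : Fin n} (h : 0 < p i j) :
    |A i j| / p i j ≤ Rp A p + ‖A‖ := by
  rw [← abs_of_pos h, ← abs_div, ← Matrix.l2_opNorm_single i j]
  calc ‖Matrix.single i j (A i j / p i j)‖ = ‖A - (A - Matrix.single i j (A i j / p i j))‖ := by
        rw [sub_sub_cancel]
    _ ≤ ‖A‖ + ‖A - Matrix.single i j (A i j / p i j)‖ := norm_sub_le _ _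
    _ ≤ Rp A p + ‖A‖ := by linarith [le_Rp h (A := A)]

lemma Rp_pos (hm : 1 < m) (hrows : ∀ i, ∃ j, A i j ≠ 0) (hp : ∀ i j, A i j ≠ 0 → 0 < p i j) :
    0 < Rp A p := by
  set i₀ : Fin m := ⟨0, by omega⟩
  set i₁ : Fin m := ⟨1, hm⟩
  obtain ⟨j₀, h₀⟩ := hrows i₀
  obtain ⟨j₁, h₁⟩ := hrows i₁
  calc 0 < |A i₁ j₁| := abs_pos.2 h₁
    _ = |(A - Matrix.single i₀ j₀ (A i₀ j₀ / p i₀ j₀)) i₁ j₁| := by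
        rw [Matrix.sub_apply, Matrix.single_apply_of_row_ne (by simp [i₀, i₁]), sub_zero]
    _ ≤ Rp A p := (Matrix.abs_apply_le_l2_opNorm _ _ _).trans (le_Rp (hp _ _ h₀))

end SamplingStatistics

section RhoFun

variable {α β z ζ : ℝ}

lemma sq_le_rhoFun (hα : 0 ≤ α) (hβ : 0 ≤ β) (hz : 0 ≤ z) (hζ : 0 < ζ) :
    (α * z / ζ) ^ 2 ≤ rhoFun α β z ζ := by
  have ha : α * z / (2 * ζ) ≤ √((α * z / (2 * ζ)) ^ 2 + β * z / ζ) :=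
    Real.le_sqrt_of_sq_le (le_add_of_nonneg_right (by positivity))
  calc (α * z / ζ) ^ 2 = (α * z / (2 * ζ) + α * z / (2 * ζ)) ^ 2 := by ring
    _ ≤ rhoFun α β z ζ := by unfold rhoFun; gcongr

lemma rhoFun_pos (hα : 0 < α) (hβ : 0 ≤ β) (hz : 0 < z) (hζ : 0 < ζ) : 0 < rhoFun α β z ζ :=
  (by positivity : 0 < (α * z / ζ) ^ 2).trans_le (sq_le_rhoFun hα.le hβ hz.le hζ)

lemma mul_rhoFun_eq (hα : 0 ≤ α) (hβ : 0 ≤ β) (hz : 0 ≤ z) (hζ : 0 < ζ) :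
    ζ * rhoFun α β z ζ = α * z * √(rhoFun α β z ζ) + β * z := by
  set a := α * z / (2 * ζ)
  set b := β * z / ζ
  have hs : √(a ^ 2 + b) ^ 2 = a ^ 2 + b := Real.sq_sqrt (by positivity)
  have hsqrt : √(rhoFun α β z ζ) = a + √(a ^ 2 + b) := Real.sqrt_sq (by positivity)
  have ha : α * z = 2 * ζ * a := by simp only [a]; field_simp
  have hb : β * z = ζ * b := by simp only [b]; field_simp
  rw [hsqrt, ha, hb, rhoFun]
  linear_combination ζ * hs

lemma sq_div_rhoFun_le (hα : 0 < α) (hβ : 0 ≤ β) (hz : 0 < z) (hζ : 0 < ζ) :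
    z ^ 2 / rhoFun α β z ζ ≤ (ζ / α) ^ 2 := by
  rw [div_le_iff₀ (rhoFun_pos hα hβ hz hζ)]
  calc z ^ 2 = (ζ / α) ^ 2 * (α * z / ζ) ^ 2 := by field_simp
    _ ≤ (ζ / α) ^ 2 * rhoFun α β z ζ := by gcongr; exact sq_le_rhoFun hα.le hβ hz.le hζ

lemma div_rhoFun_le (hα : 0 < α) (hβ : 0 < β) (hz : 0 < z) (hζ : 0 < ζ) :
    z / rhoFun α β z ζ ≤ ζ / β := by
  rw [div_le_div_iff₀ (rhoFun_pos hα hβ.le hz hζ) hβ, mul_comm, mul_rhoFun_eq hα.le hβ.le hz.le hζ]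
  nlinarith [Real.sqrt_nonneg (rhoFun α β z ζ), mul_pos hα hz]

lemma le_of_le_rhoFun (hα : 0 < α) (hβ : 0 ≤ β) (hz : 0 < z) (hζ : 0 < ζ) {r : ℝ} (hr : 0 < r)
    (hle : r ≤ rhoFun α β z ζ) : ζ ≤ α * z / √r + β * z / r := by
  have hρ := rhoFun_pos hα hβ hz hζ
  have hsqrt : 0 < √(rhoFun α β z ζ) := Real.sqrt_pos.2 hρ
  have hζ_eq : ζ = α * z / √(rhoFun α β z ζ) + β * z / rhoFun α β z ζ := by
    field_simp
    linear_combination √(rhoFun α β z ζ) * mul_rhoFun_eq hα.le hβ hz.le hζ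
      + α * z * Real.sq_sqrt hρ.le
  rw [hζ_eq]
  gcongr

variable {ι : Type*} [Fintype ι] {z : ι → ℝ}

lemma mul_sum_le_of_sum_rhoFun_eq_one (hα : 0 ≤ α) (hβ : 0 ≤ β) (hz : ∀ i, 0 ≤ z i)
    (hζ : 0 < ζ) (h : ∑ i, rhoFun α β (z i) ζ = 1) : β * ∑ i, z i ≤ ζ :=
  calc β * ∑ i, z i = ∑ i, β * z i := Finset.mul_sum _ _ _
    _ ≤ ∑ i, ζ * rhoFun α β (z i) ζ := Finset.sum_le_sum fun i _ => by
        rw [mul_rhoFun_eq hα hβ (hz i) hζ]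
        exact le_add_of_nonneg_left (mul_nonneg (mul_nonneg hα (hz i)) (Real.sqrt_nonneg _))
    _ = ζ := by rw [← Finset.mul_sum, h, mul_one]

lemma sq_mul_sq_sum_le_of_sum_rhoFun_eq_one (hα : 0 ≤ α) (hβ : 0 ≤ β) (hz : ∀ i, 0 ≤ z i)
    (hζ : 0 < ζ) (h : ∑ i, rhoFun α β (z i) ζ = 1) :
    α ^ 2 * (∑ i, z i) ^ 2 ≤ Fintype.card ι * ζ ^ 2 := by
  have hsq : α ^ 2 * ∑ i, z i ^ 2 ≤ ζ ^ 2 := by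
    have : ∑ i, (α * z i / ζ) ^ 2 ≤ 1 :=
      h ▸ Finset.sum_le_sum fun i _ => sq_le_rhoFun hα hβ (hz i) hζ
    simp only [div_pow, mul_pow, ← Finset.sum_div, ← Finset.mul_sum] at this
    rwa [div_le_one (by positivity)] at this
  calc α ^ 2 * (∑ i, z i) ^ 2 ≤ α ^ 2 * (Fintype.card ι * ∑ i, z i ^ 2) := by
        gcongr; exact sq_sum_le_card_mul_sum_sq
    _ = Fintype.card ι * (α ^ 2 * ∑ i, z i ^ 2) := by ring
    _ ≤ Fintype.card ι * ζ ^ 2 := by gcongr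

end RhoFun

section WeightedRow

variable {ι : Type*} [Fintype ι] {a q : ι → ℝ}

lemma sq_sum_abs_div_sum_le (hq : ∀ j, 0 ≤ q j) (hqa : ∀ j, a j ≠ 0 → 0 < q j) :
    (∑ j, |a j|) ^ 2 / ∑ j, q j ≤ ∑ j, a j ^ 2 / q j := by
  classical
  set s := Finset.univ.filter fun j => 0 < q j
  have hpos : ∀ j, q j ≠ 0 → 0 < q j := fun j hj => (hq j).lt_of_ne' hj
  have ha : ∑ j, |a j| = ∑ j ∈ s, |a j| :=
    (Finset.sum_filter_of_ne fun j _ hj => hqa j (abs_ne_zero.1 hj)).symm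
  have hqs : ∑ j, q j = ∑ j ∈ s, q j := (Finset.sum_filter_of_ne fun j _ hj => hpos j hj).symm
  have hdiv : ∑ j, a j ^ 2 / q j = ∑ j ∈ s, a j ^ 2 / q j :=
    (Finset.sum_filter_of_ne fun j _ hj => hpos j (right_ne_zero_of_mul hj ∘ inv_eq_zero.2)).symm
  rw [ha, hqs, hdiv]
  simpa only [sq_abs] using
    Finset.sq_sum_div_le_sum_sq_div s (fun j => |a j|) fun j hj => (Finset.mem_filter.1 hj).2

lemma exists_sum_abs_div_sum_le (hq : ∀ j, 0 ≤ q j) (hqa : ∀ j, a j ≠ 0 → 0 < q j)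
    (ha : ∃ j, a j ≠ 0) : ∃ j, 0 < q j ∧ (∑ j, |a j|) / ∑ j, q j ≤ |a j| / q j := by
  classical
  obtain ⟨j₀, hj₀⟩ := ha
  set s := Finset.univ.filter fun j => 0 < q j
  have hs : s.Nonempty := ⟨j₀, Finset.mem_filter.2 ⟨Finset.mem_univ _, hqa j₀ hj₀⟩⟩
  have hQ : 0 < ∑ j, q j :=
    (hqa j₀ hj₀).trans_le (Finset.single_le_sum (fun j _ => hq j) (Finset.mem_univ j₀))
  set c := (∑ j, |a j|) / ∑ j, q j
  have hsum : ∑ j ∈ s, c * q j ≤ ∑ j ∈ s, |a j| := by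
    rw [← Finset.mul_sum, Finset.sum_filter_of_ne fun j _ hj => (hq j).lt_of_ne' hj,
      Finset.sum_filter_of_ne fun j _ hj => hqa j (abs_ne_zero.1 hj), div_mul_cancel₀ _ hQ.ne']
  obtain ⟨j, hj, hcj⟩ := Finset.exists_le_of_sum_le hs hsum
  have hqj := (Finset.mem_filter.1 hj).2
  exact ⟨j, hqj, (le_div_iff₀ hqj).2 hcj⟩

end WeightedRow

section DataMatrix

variable {m n : ℕ} {A : Matrix (Fin m) (Fin n) ℝ} {α β ζ : ℝ}

lemma sum_abs_row_pos (hA : A ≠ 0) (hskew : ∀ i j, (∑ i', |A i' j|) ≤ ∑ j', |A i j'|)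
    (i : Fin m) : 0 < ∑ j, |A i j| := by
  obtain ⟨i₀, j₀, h⟩ : ∃ i j, A i j ≠ 0 := by
    by_contra! h
    exact hA (Matrix.ext h)
  calc 0 < |A i₀ j₀| := abs_pos.2 h
    _ ≤ ∑ i', |A i' j₀| :=
        Finset.single_le_sum (fun i' _ => abs_nonneg (A i' j₀)) (Finset.mem_univ _)
    _ ≤ ∑ j, |A i j| := hskew i j₀

lemma exists_ne_zero_of_sum_abs_pos {i : Fin m} (h : 0 < ∑ j, |A i j|) : ∃ j, A i j ≠ 0 := by
  obtain ⟨j, -, hj⟩ := Finset.exists_ne_zero_of_sum_ne_zero h.ne'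
  exact ⟨j, abs_ne_zero.1 hj⟩

lemma alpha_mul_l2_opNorm_le (hm : 0 < m)
    (hnorm : 50 * m * ‖A‖ ^ 2 ≤ (∑ i, ∑ j, |A i j|) ^ 2) (hα : 0 ≤ α) (hβ : 0 ≤ β)
    (hζ : 0 < ζ) (hρ : ∑ i, rhoFun α β (∑ j, |A i j|) ζ = 1) : α * ‖A‖ ≤ 3 / 20 * ζ := by
  have h := sq_mul_sq_sum_le_of_sum_rhoFun_eq_one hα hβ
    (fun i => Finset.sum_nonneg fun j _ => abs_nonneg (A i j)) hζ hρ
  rw [Fintype.card_fin] at h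
  have hm' : (0 : ℝ) < m := Nat.cast_pos.2 hm
  have : 50 * (α * ‖A‖) ^ 2 ≤ ζ ^ 2 := by nlinarith [mul_le_mul_of_nonneg_left hnorm (sq_nonneg α)]
  nlinarith [mul_nonneg hα (norm_nonneg A)]

lemma beta_mul_l2_opNorm_le (hm : 50 ≤ m)
    (hnorm : 50 * m * ‖A‖ ^ 2 ≤ (∑ i, ∑ j, |A i j|) ^ 2) (hα : 0 ≤ α) (hβ : 0 ≤ β)
    (hζ : 0 < ζ) (hρ : ∑ i, rhoFun α β (∑ j, |A i j|) ζ = 1) : β * ‖A‖ ≤ ζ / 50 := by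
  have h := mul_sum_le_of_sum_rhoFun_eq_one hα hβ
    (fun i => Finset.sum_nonneg fun j _ => abs_nonneg (A i j)) hζ hρ
  have hm' : (50 : ℝ) ≤ m := by exact_mod_cast hm
  have hZ : 50 * ‖A‖ ≤ ∑ i, ∑ j, |A i j| := by
    refine (pow_le_pow_iff_left₀ (by positivity) (by positivity) two_ne_zero).1 ?_
    nlinarith [sq_nonneg ‖A‖]
  nlinarith

end DataMatrix

section Pstar

variable {m n : ℕ} {A : Matrix (Fin m) (Fin n) ℝ} {α β ζ : ℝ}

lemma pstar_nonneg (hα : 0 < α) (hβ : 0 ≤ β) (hζ : 0 < ζ) (hz : ∀ i, 0 < ∑ j, |A i j|)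
    (i : Fin m) (j : Fin n) : 0 ≤ pstar α β A ζ i j :=
  div_nonneg (mul_nonneg (rhoFun_pos hα hβ (hz i) hζ).le (abs_nonneg _)) (hz i).le

lemma pstar_pos (hα : 0 < α) (hβ : 0 ≤ β) (hζ : 0 < ζ) (hz : ∀ i, 0 < ∑ j, |A i j|)
    {i : Fin m} {j : Fin n} (h : A i j ≠ 0) : 0 < pstar α β A ζ i j :=
  div_pos (mul_pos (rhoFun_pos hα hβ (hz i) hζ) (abs_pos.2 h)) (hz i)

lemma abs_div_pstar (hα : 0 < α) (hβ : 0 ≤ β) (hζ : 0 < ζ) (hz : ∀ i, 0 < ∑ j, |A i j|)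
    {i : Fin m} {j : Fin n} (h : A i j ≠ 0) :
    |A i j| / pstar α β A ζ i j = (∑ j, |A i j|) / rhoFun α β (∑ j, |A i j|) ζ := by
  have := rhoFun_pos hα hβ (hz i) hζ
  have := abs_pos.2 h
  have := hz i
  unfold pstar
  field_simp

lemma sq_div_pstar (hα : 0 < α) (hβ : 0 ≤ β) (hζ : 0 < ζ) (hz : ∀ i, 0 < ∑ j, |A i j|)
    (i : Fin m) (j : Fin n) :
    A i j ^ 2 / pstar α β A ζ i j = |A i j| * ((∑ j, |A i j|) / rhoFun α β (∑ j, |A i j|) ζ) := by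
  by_cases h : A i j = 0
  · simp [h]
  · rw [← abs_div_pstar hα hβ hζ hz h, ← sq_abs, sq, mul_div_assoc]

lemma sigmaSq_pstar_le (hα : 0 < α) (hβ : 0 ≤ β) (hζ : 0 < ζ) (hz : ∀ i, 0 < ∑ j, |A i j|)
    (hskew : ∀ i j, (∑ i', |A i' j|) ≤ ∑ j', |A i j'|) :
    sigmaSq A (pstar α β A ζ) ≤ (ζ / α) ^ 2 + ‖A‖ ^ 2 := by
  have hrow : ∀ i, (∑ j, |A i j|) / rhoFun α β (∑ j, |A i j|) ζ ≤ (ζ / α) ^ 2 / ∑ j, |A i j| :=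
    fun i => by
      rw [le_div_iff₀ (hz i), div_mul_eq_mul_div, ← sq]
      exact sq_div_rhoFun_le hα hβ (hz i) hζ
  refine sigmaSq_le_of_forall A _ (pstar_nonneg hα hβ hζ hz) (by positivity) (fun i => ?_)
    fun j => ?_
  · simp_rw [sq_div_pstar hα hβ hζ hz, ← Finset.sum_mul]
    exact (le_div_iff₀' (hz i)).1 (hrow i)
  · have hcol : ∀ i, |A i j| / ∑ j', |A i j'| ≤ |A i j| / ∑ i', |A i' j| := fun i => by
      rcases (abs_nonneg (A i j)).eq_or_lt with h | h
      · rw [← h, zero_div, zero_div]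
      · exact div_le_div_of_nonneg_left h.le
          (h.trans_le (Finset.single_le_sum (fun i' _ => abs_nonneg (A i' j)) (Finset.mem_univ i)))
          (hskew i j)
    calc ∑ i, A i j ^ 2 / pstar α β A ζ i j ≤ ∑ i, (ζ / α) ^ 2 * (|A i j| / ∑ i', |A i' j|) := by
          refine Finset.sum_le_sum fun i _ => ?_
          rw [sq_div_pstar hα hβ hζ hz, mul_comm]
          calc _ ≤ (ζ / α) ^ 2 / (∑ j', |A i j'|) * |A i j| :=
                mul_le_mul_of_nonneg_right (hrow i) (abs_nonneg _)
            _ = (ζ / α) ^ 2 * (|A i j| / ∑ j', |A i j'|) := by ring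
            _ ≤ _ := mul_le_mul_of_nonneg_left (hcol i) (by positivity)
      _ = (ζ / α) ^ 2 * ((∑ i, |A i j|) / ∑ i', |A i' j|) := by rw [Finset.sum_div, Finset.mul_sum]
      _ ≤ (ζ / α) ^ 2 := mul_le_of_le_one_right (by positivity) (div_self_le_one _)

lemma Rp_pstar_le (hα : 0 < α) (hβ : 0 < β) (hζ : 0 < ζ) (hz : ∀ i, 0 < ∑ j, |A i j|) :
    Rp A (pstar α β A ζ) ≤ ‖A‖ + ζ / β := by
  refine Rp_le_of_forall (by positivity) fun i j hp => ?_
  have h : A i j ≠ 0 := fun h => by simp [pstar, h] at hp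
  rw [abs_div, abs_of_pos hp, abs_div_pstar hα hβ.le hζ hz h]
  exact div_rhoFun_le hα hβ (hz i) hζ

end Pstar

lemma add_le_of_sq_add_mul_le {u v ε : ℝ} (hu : 0 ≤ u) (hε : 0 < ε)
    (h : u ^ 2 + v * ε ≤ ε ^ 2) : u + v ≤ 5 / 4 * ε := by
  have hvε : v ≤ ε := by nlinarith
  have hu' : u ≤ 5 / 4 * ε - v :=
    (pow_le_pow_iff_left₀ hu (by linarith) two_ne_zero).1 (by nlinarith [sq_nonneg (3 / 4 * ε - v)])
  linarith

section Comparison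

variable {m n : ℕ} {A : Matrix (Fin m) (Fin n) ℝ} {α β ζ ε : ℝ}

lemma le_sigmaSq_Rp_of_sum_rhoFun_eq_one (hα : 0 < α) (hβ : 0 ≤ β) (hζ : 0 < ζ)
    (hz : ∀ i, 0 < ∑ j, |A i j|)
    (hρ : ∑ i, rhoFun α β (∑ j, |A i j|) ζ = 1) {q : Fin m → Fin n → ℝ} (hq0 : ∀ i j, 0 ≤ q i j)
    (hqsum : ∑ i, ∑ j, q i j = 1) (hqpos : ∀ i j, A i j ≠ 0 → 0 < q i j) :
    ζ ≤ α * (√(sigmaSq A q) + ‖A‖) + β * (Rp A q + ‖A‖) := by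
  obtain ⟨i, -, hi⟩ := Finset.exists_le_of_sum_le
    (Finset.nonempty_of_sum_ne_zero (hρ ▸ one_ne_zero)) (hqsum.trans hρ.symm).le
  obtain ⟨j₀, hj₀⟩ := exists_ne_zero_of_sum_abs_pos (hz i)
  have hr : 0 < ∑ j, q i j :=
    (hqpos i j₀ hj₀).trans_le (Finset.single_le_sum (fun j _ => hq0 i j) (Finset.mem_univ j₀))
  have hσ : (∑ j, |A i j|) / √(∑ j, q i j) ≤ √(sigmaSq A q) + ‖A‖ := by
    rw [← Real.sqrt_sq (hz i).le, ← Real.sqrt_div' _ hr.le, Real.sqrt_le_iff]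
    refine ⟨by positivity, ?_⟩
    calc (∑ j, |A i j|) ^ 2 / ∑ j, q i j ≤ ∑ j, A i j ^ 2 / q i j :=
          sq_sum_abs_div_sum_le (hq0 i) (hqpos i)
      _ ≤ sigmaSq A q + ‖A‖ ^ 2 := sum_sq_div_le_sigmaSq_add A q i
      _ ≤ (√(sigmaSq A q) + ‖A‖) ^ 2 := by
          nlinarith [Real.sq_sqrt (sigmaSq_nonneg A q), Real.sqrt_nonneg (sigmaSq A q),
            norm_nonneg A]
  obtain ⟨j, hqj, hj⟩ := exists_sum_abs_div_sum_le (hq0 i) (hqpos i) ⟨j₀, hj₀⟩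
  have hR : (∑ j, |A i j|) / ∑ j, q i j ≤ Rp A q + ‖A‖ := hj.trans (abs_div_le_Rp_add hqj)
  calc ζ ≤ α * (∑ j, |A i j|) / √(∑ j, q i j) + β * (∑ j, |A i j|) / ∑ j, q i j :=
        le_of_le_rhoFun hα hβ (hz i) hζ hr hi
    _ = α * ((∑ j, |A i j|) / √(∑ j, q i j)) + β * ((∑ j, |A i j|) / ∑ j, q i j) := by ring
    _ ≤ α * (√(sigmaSq A q) + ‖A‖) + β * (Rp A q + ‖A‖) := by gcongr

-- The `‖A‖` terms cost at most `(3/20 + 1/50) ζ = (17/100) ζ`, and `(83/100) ζ ≤ (5/4) ε`.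
lemma le_mul_of_sq_mul_sigmaSq_add_le (hα : 0 < α) (hβ : 0 ≤ β) (hζ : 0 < ζ)
    (hz : ∀ i, 0 < ∑ j, |A i j|) (hρ : ∑ i, rhoFun α β (∑ j, |A i j|) ζ = 1)
    (hαA : α * ‖A‖ ≤ 3 / 20 * ζ) (hβA : β * ‖A‖ ≤ ζ / 50)
    {q : Fin m → Fin n → ℝ} (hq0 : ∀ i j, 0 ≤ q i j) (hqsum : ∑ i, ∑ j, q i j = 1)
    (hqpos : ∀ i j, A i j ≠ 0 → 0 < q i j) (hε : 0 < ε)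
    (h : α ^ 2 * sigmaSq A q + β * Rp A q * ε ≤ ε ^ 2) : ζ ≤ 125 / 83 * ε := by
  have hζq := le_sigmaSq_Rp_of_sum_rhoFun_eq_one hα hβ hζ hz hρ hq0 hqsum hqpos
  have hε' := add_le_of_sq_add_mul_le (u := α * √(sigmaSq A q)) (v := β * Rp A q)
    (by positivity) hε (by rwa [mul_pow, Real.sq_sqrt (sigmaSq_nonneg A q)])
  linarith

lemma sq_mul_sigmaSq_pstar_add_le (hα : 0 < α) (hβ : 0 < β) (hζ : 0 < ζ)
    (hz : ∀ i, 0 < ∑ j, |A i j|) (hskew : ∀ i j, (∑ i', |A i' j|) ≤ ∑ j', |A i j'|)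
    (hαA : α * ‖A‖ ≤ 3 / 20 * ζ) (hβA : β * ‖A‖ ≤ ζ / 50) (hε : ζ ≤ 125 / 83 * ε) :
    α ^ 2 * sigmaSq A (pstar α β A ζ) + β * Rp A (pstar α β A ζ) * (3 * ε) ≤ (3 * ε) ^ 2 := by
  have hσ : α ^ 2 * sigmaSq A (pstar α β A ζ) ≤ 409 / 400 * ζ ^ 2 :=
    calc α ^ 2 * sigmaSq A (pstar α β A ζ) ≤ α ^ 2 * ((ζ / α) ^ 2 + ‖A‖ ^ 2) := by
          gcongr; exact sigmaSq_pstar_le hα hβ.le hζ hz hskew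
      _ = ζ ^ 2 + (α * ‖A‖) ^ 2 := by field_simp
      _ ≤ 409 / 400 * ζ ^ 2 := by nlinarith [mul_nonneg hα.le (norm_nonneg A)]
  have hR : β * Rp A (pstar α β A ζ) ≤ 51 / 50 * ζ :=
    calc β * Rp A (pstar α β A ζ) ≤ β * (‖A‖ + ζ / β) := by
          gcongr; exact Rp_pstar_le hα hβ hζ hz
      _ = β * ‖A‖ + ζ := by field_simp
      _ ≤ 51 / 50 * ζ := by linarith
  have hε0 : 0 < ε := by linarith
  nlinarith [mul_le_mul_of_nonneg_right hR hε0.le, mul_le_mul_of_nonneg_right hε hζ.le,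
    mul_le_mul_of_nonneg_right hε hε0.le]

end Comparison

section Eps1

variable {m n s : ℕ} {δ : ℝ}

lemma mul_exp_neg_div_le_iff {c x D : ℝ} (hc : 0 < c) (hδ : 0 < δ) (hD : 0 < D) :
    c * Real.exp (-x / D) ≤ δ ↔ Real.log (c / δ) * D ≤ x := by
  rw [← le_div_iff₀' hc, ← Real.le_log_iff_exp_le (by positivity), Real.log_div hδ.ne' hc.ne',
    Real.log_div hc.ne' hδ.ne', neg_div, neg_le, neg_sub, le_div_iff₀ hD]

lemma alphaC_pos (hs : 0 < s) (hδ : 0 < δ) (h : δ < m + n) : 0 < alphaC m n s δ :=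
  Real.sqrt_pos.2 (div_pos (Real.log_pos ((one_lt_div hδ).2 h)) (by exact_mod_cast hs))

lemma betaC_pos (hs : 0 < s) (hδ : 0 < δ) (h : δ < m + n) : 0 < betaC m n s δ :=
  div_pos (Real.log_pos ((one_lt_div hδ).2 h)) (by positivity)

lemma mul_exp_tail_le_iff (hs : 0 < s) (hδ : 0 < δ) (h : δ < m + n) {σ R ε : ℝ}
    (hσ : 0 ≤ σ) (hR : 0 < R) (hε : 0 < ε) :
    (m + n : ℝ) * Real.exp (-(s * ε ^ 2) / (σ + R * ε / 3)) ≤ δ ↔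
      alphaC m n s δ ^ 2 * σ + betaC m n s δ * R * ε ≤ ε ^ 2 := by
  have hs' : (0 : ℝ) < s := by exact_mod_cast hs
  have hL := Real.log_pos ((one_lt_div hδ).2 h)
  set L := Real.log ((m + n : ℝ) / δ)
  rw [mul_exp_neg_div_le_iff (hδ.trans h) hδ (by positivity), alphaC,
    Real.sq_sqrt (by positivity), betaC,
    show L / s * σ + L / (3 * s) * R * ε = L * (σ + R * ε / 3) / s by field_simp,
    div_le_iff₀ hs', mul_comm (ε ^ 2)]

end Eps1

lemma csInf_le_mul_csInf {S T : Set ℝ} {c : ℝ} (hc : 0 < c) (hS : S.Nonempty) (hT : BddBelow T)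
    (h : ∀ x ∈ S, c * x ∈ T) : sInf T ≤ c * sInf S := by
  rw [← div_le_iff₀' hc]
  exact le_csInf hS fun x hx => (div_le_iff₀' hc).2 (csInf_le hT (h x hx))

theorem stmt16_general (m n : ℕ) (hm : 50 ≤ m)
    (A : Matrix (Fin m) (Fin n) ℝ) (hA : A ≠ 0)
    (hskew : ∀ i j, (∑ i', |A i' j|) ≤ ∑ j', |A i j'|)
    (hnorm : 50 * m * specNorm A ^ 2 ≤ (∑ i, ∑ j, |A i j|) ^ 2)
    (s : ℕ) (hs : 1 ≤ s) (δ : ℝ) (hδ : δ ∈ Set.Ioo (0 : ℝ) 1)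
    (ζ₁ : ℝ) (hζ : 0 < ζ₁)
    (hρsum : ∑ i, rhoFun (alphaC m n s δ) (betaC m n s δ) (∑ j, |A i j|) ζ₁ = 1) :
    ∀ q : Fin m → Fin n → ℝ, (∀ i j, 0 ≤ q i j) → (∑ i, ∑ j, q i j) = 1 →
      (∀ i j, A i j ≠ 0 → 0 < q i j) →
      eps1 s δ A (pstar (alphaC m n s δ) (betaC m n s δ) A ζ₁) ≤ 3 * eps1 s δ A q := by
  intro q hq0 hqsum hqpos
  obtain ⟨hδ0, hδ1⟩ := hδ
  have hδmn : δ < m + n := hδ1.trans_le (by norm_cast; omega)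
  have hα := alphaC_pos (m := m) (n := n) hs hδ0 hδmn
  have hβ := betaC_pos (m := m) (n := n) hs hδ0 hδmn
  set α := alphaC m n s δ
  set β := betaC m n s δ
  have hz := sum_abs_row_pos hA hskew
  have hrows i := exists_ne_zero_of_sum_abs_pos (hz i)
  have hαA := alpha_mul_l2_opNorm_le (by omega) hnorm hα.le hβ.le hζ hρsum
  have hβA := beta_mul_l2_opNorm_le hm hnorm hα.le hβ.le hζ hρsum
  have hRq := Rp_pos (by omega) hrows hqpos
  have hRp := Rp_pos (by omega) hrows fun i j => pstar_pos hα hβ.le hζ hz (A := A)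
  have hσq := sigmaSq_nonneg A q
  refine csInf_le_mul_csInf three_pos ⟨α * √(sigmaSq A q) + β * Rp A q, by positivity, ?_⟩
    ⟨0, fun ε hε => hε.1.le⟩ fun ε ⟨hε, hεq⟩ => ⟨by positivity, ?_⟩
  -- a witness is needed: over an empty set `sInf` would give `ε₁(q) = 0`
  · rw [mul_exp_tail_le_iff hs hδ0 hδmn hσq hRq (by positivity)]
    nlinarith [Real.sq_sqrt hσq, mul_nonneg (mul_nonneg hα.le hβ.le)
      (mul_nonneg hRq.le (Real.sqrt_nonneg (sigmaSq A q)))]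
  · rw [mul_exp_tail_le_iff hs hδ0 hδmn hσq hRq hε] at hεq
    rw [mul_exp_tail_le_iff hs hδ0 hδmn (sigmaSq_nonneg _ _) hRp (by positivity)]
    exact sq_mul_sigmaSq_pstar_add_le hα hβ hζ hz hskew hαA hβA
      (le_mul_of_sq_mul_sigmaSq_add_le hα hβ.le hζ hz hρsum hαA hβA hq0 hqsum hqpos hε hεq)

/-- If `A` is a data matrix (nonzero, `min_i ‖A_(i)‖₁ ≥ max_j ‖A^(j)‖₁`,
`‖A‖₁² ≥ 50·m·‖A‖₂²`, `m ≥ 50`) then for the algorithm's distribution `p*` and every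
sampling distribution `q` on the entries of `A`, `ε₁(p*) ≤ 3·ε₁(q)`. -/
theorem stmt16 (m n : ℕ) (hm : 50 ≤ m) (hn : 0 < n)
    (A : Matrix (Fin m) (Fin n) ℝ) (hA : A ≠ 0)
    (hskew : ∀ i j, (∑ i', |A i' j|) ≤ ∑ j', |A i j'|)
    (hnorm : 50 * m * specNorm A ^ 2 ≤ (∑ i, ∑ j, |A i j|) ^ 2)
    (s : ℕ) (hs : 1 ≤ s) (δ : ℝ) (hδ : δ ∈ Set.Ioo (0 : ℝ) 1)
    (ζ₁ : ℝ) (hζ : 0 < ζ₁)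
    (hρsum : ∑ i, rhoFun (alphaC m n s δ) (betaC m n s δ) (∑ j, |A i j|) ζ₁ = 1) :
    ∀ q : Fin m → Fin n → ℝ, (∀ i j, 0 ≤ q i j) → (∑ i, ∑ j, q i j) = 1 →
      (∀ i j, A i j ≠ 0 → 0 < q i j) →
      eps1 s δ A (pstar (alphaC m n s δ) (betaC m n s δ) A ζ₁) ≤ 3 * eps1 s δ A q :=
  stmt16_general m n hm A hA hskew hnorm s hs δ hδ ζ₁ hζ hρsum
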